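/- arXiv:2505.00778 — 5 statements merged into one kernel-verified Lean document; each statement's English description precedes it below -/
import Mathlib

section
/- Let {r_j (mod m_j) : 1 ≤ j ≤ τ} be a covering system, let p_1, …, p_τ be pairwise distinct odd primes such that p_j divides 2^{m_j} − 1 for each j, and let k be an odd positive integer with k·2^{r_j} ≡ 1 (mod p_j) for each j. Then for every integer b ≥ 2, there exist infinitely many positive integers t such that the b-repinteger k_b^{(t)} is a Riesel number. -/
/-- A number is composite if it is a product of two integers greater than 1. -/
def IsComposite (n : ℕ) : Prop := ∃ a b : ℕ, 1 < a ∧ 1 < b ∧ n = a * b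

/-- A Riesel number is an odd positive integer `k` such that `k·2^n − 1` is composite
for every positive integer `n`. -/
def IsRiesel (k : ℕ) : Prop := 0 < k ∧ Odd k ∧ ∀ n : ℕ, 0 < n → IsComposite (k * 2 ^ n - 1)

/-- The `b`-repinteger `k_b^{(t)} = k·(b^{ℓt} − 1)/(b^ℓ − 1)`, where
`ℓ = ⌊log_b(k)⌋ + 1` is the number of base-`b` digits of `k`. -/
def repinteger (b k t : ℕ) : ℕ :=
  k * ((b ^ ((Nat.log b k + 1) * t) - 1) / (b ^ (Nat.log b k + 1) - 1))

lemma aux_geom_nat (x : ℕ) (hx : 1 ≤ x) (t : ℕ) :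
    (x - 1) * ∑ i ∈ Finset.range t, x ^ i = x ^ t - 1 := by
  induction t with
  | zero => simp
  | succ t ih =>
    rw [Finset.sum_range_succ, Nat.mul_add, ih, pow_succ]
    have h1 : 1 ≤ x ^ t := Nat.one_le_pow _ _ hx
    have h2 : x ^ t ≤ x ^ t * x := Nat.le_mul_of_pos_right _ hx
    have h3 : (x - 1) * x ^ t = x ^ t * x - x ^ t := by
      rw [Nat.sub_mul, one_mul, mul_comm]
    omega

lemma aux_div_geom (x : ℕ) (hx : 2 ≤ x) (t : ℕ) :
    (x ^ t - 1) / (x - 1) = ∑ i ∈ Finset.range t, x ^ i := by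
  rw [← aux_geom_nat x (by omega) t, Nat.mul_div_cancel_left _ (by omega)]

lemma aux_repinteger_eq (b k t : ℕ) (hb : 2 ≤ b) :
    repinteger b k t = k * ∑ i ∈ Finset.range t, (b ^ (Nat.log b k + 1)) ^ i := by
  have hx : 2 ≤ b ^ (Nat.log b k + 1) :=
    le_trans hb (Nat.le_self_pow (by omega) b)
  rw [repinteger, pow_mul, aux_div_geom _ hx]

/-- The key congruence: if `p*(p-1) ∣ D` then `∑_{i < 1 + D*s} x^i ≡ 1 (mod p)`. -/
lemma aux_sum_one_mod (P : ℕ) (hP : P.Prime) (D s x : ℕ) (hD : P * (P - 1) ∣ D) :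
    ((∑ i ∈ Finset.range (1 + D * s), x ^ i : ℕ) : ZMod P) = 1 := by
  haveI : Fact P.Prime := ⟨hP⟩
  push_cast
  set B : ZMod P := ((x : ℕ) : ZMod P) with hB
  rw [add_comm 1 (D * s), Finset.sum_range_succ']
  simp only [pow_zero, pow_succ']
  rw [← Finset.mul_sum]
  have hT : B * ∑ i ∈ Finset.range (D * s), B ^ i = 0 := by
    by_cases hB0 : B = 0
    · rw [hB0, zero_mul]
    by_cases hB1 : B = 1
    · rw [hB1, one_mul]
      simp only [one_pow, Finset.sum_const, Finset.card_range, nsmul_eq_mul, mul_one]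
      have hPD : P ∣ D * s := dvd_mul_of_dvd_left (dvd_trans (dvd_mul_right P (P - 1)) hD) s
      exact (ZMod.natCast_eq_zero_iff _ _).mpr hPD
    · have hpow : B ^ (D * s) = 1 := by
        obtain ⟨c, hc⟩ : (P - 1) ∣ D * s :=
          dvd_mul_of_dvd_left (dvd_trans (dvd_mul_left (P - 1) P) hD) s
        rw [hc, pow_mul, ZMod.pow_card_sub_one_eq_one hB0, one_pow]
      have hgs : (∑ i ∈ Finset.range (D * s), B ^ i) * (B - 1) = 0 := by
        rw [geom_sum_mul, hpow, sub_self]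
      have : (∑ i ∈ Finset.range (D * s), B ^ i) = 0 :=
        (mul_eq_zero.mp hgs).resolve_right (sub_ne_zero.mpr hB1)
      rw [this, mul_zero]
  rw [hT, zero_add]

/-- If `(2 : ZMod P)^M = 1` and `n ≡ r (mod M)` over `ℤ`, then `2^n = 2^r` in `ZMod P`. -/
lemma aux_pow_congr (P M n r : ℕ) (h2 : (2 : ZMod P) ^ M = 1)
    (hmod : (n : ℤ) ≡ (r : ℤ) [ZMOD (M : ℤ)]) :
    (2 : ZMod P) ^ n = (2 : ZMod P) ^ r := by
  have hdvd : (M : ℤ) ∣ (r : ℤ) - (n : ℤ) := Int.ModEq.dvd hmod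
  rcases le_total n r with h | h
  · have : (M : ℤ) ∣ ((r - n : ℕ) : ℤ) := by
      rwa [Nat.cast_sub h]
    obtain ⟨c, hc⟩ := Int.natCast_dvd_natCast.mp this
    have hr : r = n + M * c := by omega
    rw [hr, pow_add, pow_mul, h2, one_pow, mul_one]
  · have : (M : ℤ) ∣ ((n - r : ℕ) : ℤ) := by
      rw [Nat.cast_sub h]
      exact Int.ModEq.dvd hmod.symm
    obtain ⟨c, hc⟩ := Int.natCast_dvd_natCast.mp this
    have hn : n = r + M * c := by omega
    rw [hn, pow_add, pow_mul, h2, one_pow, mul_one]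

/-- Let `{r_j (mod m_j) : 1 ≤ j ≤ τ}` be a covering system, let
`p_1, …, p_τ` be pairwise distinct odd primes such that `p_j ∣ 2^{m_j} − 1` for each `j`,
and let `k` be an odd positive integer with `k·2^{r_j} ≡ 1 (mod p_j)` for each `j`.
Then for every integer `b ≥ 2`, there exist infinitely many positive integers `t` such
that the `b`-repinteger `k_b^{(t)}` is a Riesel number. -/
theorem stmt_3 (τ : ℕ) (r m p : Fin τ → ℕ)
    (hm : ∀ j, 0 < m j)
    (hcov : ∀ n : ℤ, ∃ j, n ≡ (r j : ℤ) [ZMOD (m j : ℤ)])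
    (hp : ∀ j, (p j).Prime ∧ Odd (p j))
    (hdist : Function.Injective p)
    (hdvd : ∀ j, p j ∣ 2 ^ (m j) - 1)
    (k : ℕ) (hk : 0 < k) (hodd : Odd k)
    (hcong : ∀ j, k * 2 ^ (r j) ≡ 1 [MOD p j]) :
    ∀ b : ℕ, 2 ≤ b → {t : ℕ | 0 < t ∧ IsRiesel (repinteger b k t)}.Infinite := by
  intro b hb
  set ℓ := Nat.log b k + 1 with hℓ
  have hx : 2 ≤ b ^ ℓ := le_trans hb (Nat.le_self_pow (by omega) b)
  set D : ℕ := 2 * ∏ j, p j * (p j - 1) with hD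
  have hDpos : 0 < D := by
    apply Nat.mul_pos (by omega)
    apply Finset.prod_pos
    intro j _
    have := (hp j).1.two_le
    exact Nat.mul_pos (by omega) (by omega)
  have hD2 : 2 * (2 - 1) ∣ D := by
    have h : (2 : ℕ) ∣ D := dvd_mul_right 2 _
    simpa using h
  have hDj : ∀ j, p j * (p j - 1) ∣ D :=
    fun j => dvd_mul_of_dvd_right (Finset.dvd_prod_of_mem _ (Finset.mem_univ j)) 2
  set P : ℕ := Finset.univ.sup p with hPdef
  set N : ℕ := P + 2 with hN
  set f : ℕ → ℕ := fun s => 1 + D * (s + N) with hf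
  refine Set.infinite_of_injective_forall_mem (f := f) ?_ ?_
  · intro a b hab
    simp only [hf] at hab
    have : D * (a + N) = D * (b + N) := by omega
    have := Nat.eq_of_mul_eq_mul_left hDpos this
    omega
  · intro s
    set t : ℕ := f s with ht
    have ht1 : t = 1 + D * (s + N) := rfl
    have htpos : 0 < t := by omega
    -- the repinteger
    have hrep : repinteger b k t = k * ∑ i ∈ Finset.range t, (b ^ ℓ) ^ i :=
      aux_repinteger_eq b k t hb
    set S : ℕ := ∑ i ∈ Finset.range t, (b ^ ℓ) ^ i with hS
    set K : ℕ := k * S with hK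
    -- size estimates
    have hSbig : t ≤ S := by
      have h1 : (b ^ ℓ) ^ (t - 1) ≤ S := by
        apply Finset.single_le_sum (f := fun i => (b ^ ℓ) ^ i)
        · intro i _; exact Nat.zero_le _
        · exact Finset.mem_range.mpr (by omega)
      have h2 : 2 ^ (t - 1) ≤ (b ^ ℓ) ^ (t - 1) := Nat.pow_le_pow_left hx _
      have h3 : t - 1 < 2 ^ (t - 1) := Nat.lt_two_pow_self
      omega
    have htbig : P + 2 ≤ t := by
      have : N ≤ D * (s + N) := by
        calc N ≤ 1 * (s + N) := by omega
        _ ≤ D * (s + N) := Nat.mul_le_mul_right _ hDpos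
      omega
    have hKS : S ≤ K := Nat.le_mul_of_pos_left S hk
    have hKbig : P + 2 ≤ K := le_trans htbig (le_trans hSbig hKS)
    have hKpos : 0 < K := by omega
    -- S ≡ 1 mod any prime q with q*(q-1) ∣ D
    have hSmod : ∀ q : ℕ, q.Prime → q * (q - 1) ∣ D → ((S : ZMod q) = 1) := by
      intro q hq hqD
      rw [hS, ht1]
      exact aux_sum_one_mod q hq D (s + N) (b ^ ℓ) hqD
    -- K is odd
    have hKodd : Odd K := by
      rcases Nat.even_or_odd K with he | ho
      · exfalso
        have h2K : (2 : ℕ) ∣ K := even_iff_two_dvd.mp he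
        have hS2 : (S : ZMod 2) = 1 := hSmod 2 Nat.prime_two hD2
        have hk2 : (k : ZMod 2) = 1 := by
          have hmod : k ≡ 1 [MOD 2] := by
            rcases hodd with ⟨c, hc⟩
            unfold Nat.ModEq
            omega
          simpa using (ZMod.natCast_eq_natCast_iff _ _ _).mpr hmod
        have : (K : ZMod 2) = 0 := (ZMod.natCast_eq_zero_iff K 2).mpr h2K
        rw [hK] at this
        push_cast at this
        rw [hS2, hk2, one_mul] at this
        exact one_ne_zero this
      · exact ho
    refine ⟨htpos, ?_⟩
    rw [hrep]
    refine ⟨hKpos, hKodd, ?_⟩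
    intro n hn
    obtain ⟨j, hj⟩ := hcov (n : ℤ)
    have hpj := (hp j).1
    haveI : Fact (p j).Prime := ⟨hpj⟩
    have hpj2 : p j ≠ 2 := by
      rcases (hp j).2 with ⟨c, hc⟩; omega
    -- 2^(m j) = 1 in ZMod (p j)
    have h2m : (2 : ZMod (p j)) ^ (m j) = 1 := by
      have h1 : (1 : ℕ) ≤ 2 ^ (m j) := Nat.one_le_two_pow
      have := (ZMod.natCast_eq_zero_iff (2 ^ (m j) - 1) (p j)).mpr (hdvd j)
      rw [Nat.cast_sub h1] at this
      push_cast at this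
      have := sub_eq_zero.mp this
      simpa using this
    -- 2^n = 2^(r j) in ZMod (p j)
    have h2n : (2 : ZMod (p j)) ^ n = (2 : ZMod (p j)) ^ (r j) :=
      aux_pow_congr (p j) (m j) n (r j) h2m hj
    -- k * 2^(r j) = 1 in ZMod (p j)
    have hk1 : ((k : ZMod (p j)) * (2 : ZMod (p j)) ^ (r j)) = 1 := by
      have := (ZMod.natCast_eq_natCast_iff _ _ _).mpr (hcong j)
      push_cast at this
      exact this
    -- p j divides K * 2^n - 1
    have hSj : (S : ZMod (p j)) = 1 := hSmod (p j) hpj (hDj j)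
    have hdvdKn : p j ∣ K * 2 ^ n - 1 := by
      rw [← ZMod.natCast_eq_zero_iff]
      have h1 : (1 : ℕ) ≤ K * 2 ^ n :=
        Nat.one_le_iff_ne_zero.mpr (Nat.mul_ne_zero (by omega) (by positivity))
      rw [Nat.cast_sub h1]
      push_cast
      rw [hK]
      push_cast
      rw [hSj, mul_one, h2n, hk1]
      ring
    -- size : K * 2^n - 1 > p j
    have hpjP : p j ≤ P := Finset.le_sup (Finset.mem_univ j)
    have h2npos : 2 ≤ 2 ^ n := by
      calc (2:ℕ) = 2 ^ 1 := rfl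
      _ ≤ 2 ^ n := Nat.pow_le_pow_right (by omega) hn
    have hsize : p j < K * 2 ^ n - 1 := by
      have : K * 2 ≤ K * 2 ^ n := Nat.mul_le_mul_left K h2npos
      omega
    obtain ⟨a, ha⟩ := hdvdKn
    refine ⟨p j, a, hpj.one_lt, ?_, ha⟩
    by_contra hcon
    push_neg at hcon
    interval_cases a <;> omega
end

section
/- Every positive integer k with k ≡ 10702091 (mod 11184810) is a Riesel number. -/
/-!
The primes `3, 5, 7, 13, 17, 241` divide `2^24 - 1` and `11184810`, so modulo each of them
`k·2^n ≡ 10702091·2^(n mod 24)`. The congruences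
`n ≡ 1 (mod 2)`, `n ≡ 0 (mod 4)`, `n ≡ 0 (mod 3)`, `n ≡ 2 (mod 12)`, `n ≡ 10 (mod 24)`,
`n ≡ 22 (mod 24)` cover all integers, and `10702091` is chosen so that on these classes
`3, 5, 7, 13, 17, 241` respectively divide `10702091·2^n − 1`. Since `k·2^n − 1` is larger than
`241`, it is composite.
-/

lemma isComposite_of_dvd {p m : ℕ} (hp : 1 < p) (hd : p ∣ m) (hm : p < m) : IsComposite m := by
  obtain ⟨b, rfl⟩ := hd
  refine ⟨p, b, hp, ?_, rfl⟩
  rcases b with _ | _ | b <;> omega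

lemma Nat.ModEq.pow_eq_pow_mod {a L p : ℕ} (h : a ^ L ≡ 1 [MOD p]) (n : ℕ) :
    a ^ n ≡ a ^ (n % L) [MOD p] := by
  rw [← ZMod.natCast_eq_natCast_iff] at h ⊢
  push_cast at h ⊢
  exact _root_.pow_eq_pow_mod n h

def rieselCoverPrime (n : ℕ) : ℕ :=
  if n % 2 = 1 then 3 else if n % 4 = 0 then 5 else if n % 3 = 0 then 7
  else if n % 12 = 2 then 13 else if n % 24 = 10 then 17 else 241

lemma rieselCoverPrime_mod_24 (n : ℕ) : rieselCoverPrime (n % 24) = rieselCoverPrime n := by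
  unfold rieselCoverPrime
  have h2 : n % 24 % 2 = n % 2 := by omega
  have h3 : n % 24 % 3 = n % 3 := by omega
  have h4 : n % 24 % 4 = n % 4 := by omega
  have h12 : n % 24 % 12 = n % 12 := by omega
  rw [h2, h3, h4, h12, Nat.mod_mod]

lemma rieselCoverPrime_spec (s : ℕ) (hs : s < 24) :
    1 < rieselCoverPrime s ∧ rieselCoverPrime s ≤ 241 ∧ rieselCoverPrime s ∣ 11184810 ∧
      2 ^ 24 ≡ 1 [MOD rieselCoverPrime s] ∧ 10702091 * 2 ^ s ≡ 1 [MOD rieselCoverPrime s] := by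
  revert s
  decide

lemma mul_two_pow_modEq_one {k : ℕ} (hk : k ≡ 10702091 [MOD 11184810]) (n : ℕ) :
    k * 2 ^ n ≡ 1 [MOD rieselCoverPrime n] := by
  obtain ⟨-, -, hdvd, hperiod, hcover⟩ :=
    rieselCoverPrime_spec (n % 24) (Nat.mod_lt n (by norm_num))
  rw [rieselCoverPrime_mod_24] at hdvd hperiod hcover
  exact ((hk.of_dvd hdvd).mul (hperiod.pow_eq_pow_mod n)).trans hcover

theorem stmt_7_general (k : ℕ) (hmod : k ≡ 10702091 [MOD 11184810]) :
    IsRiesel k := by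
  have hk_ge : 10702091 ≤ k := (hmod ▸ Nat.mod_le k 11184810 :)
  have hk_odd : Odd k := Nat.odd_iff.mpr (hmod.of_dvd (by norm_num : 2 ∣ 11184810))
  refine ⟨by omega, hk_odd, fun n _ => ?_⟩
  obtain ⟨hp_one, hp_le, -⟩ := rieselCoverPrime_spec (n % 24) (Nat.mod_lt n (by norm_num))
  rw [rieselCoverPrime_mod_24] at hp_one hp_le
  have hk_le : k ≤ k * 2 ^ n := Nat.le_mul_of_pos_right k (Nat.two_pow_pos n)
  have hdvd : rieselCoverPrime n ∣ k * 2 ^ n - 1 :=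
    (Nat.modEq_iff_dvd' (by omega)).mp (mul_two_pow_modEq_one hmod n).symm
  exact isComposite_of_dvd hp_one hdvd (by omega)

/-- Every positive integer `k` with `k ≡ 10702091 (mod 11184810)` is a
Riesel number. -/
theorem stmt_7 (k : ℕ) (hk : 0 < k) (hmod : k ≡ 10702091 [MOD 11184810]) :
    IsRiesel k :=
  stmt_7_general k hmod
end

section
/- For every integer b > 78557, there exist infinitely many positive integers t such that the b-repdigit 78557·(b^t − 1)/(b − 1) is a Sierpiński number; in particular, for every integer b > 78557 there exist infinitely many b-repdigit Sierpiński numbers. -/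
/-- A Sierpiński number is an odd positive integer `k` such that `k·2^n + 1` is composite
for every positive integer `n`. -/
def IsSierpinski (k : ℕ) : Prop := 0 < k ∧ Odd k ∧ ∀ n : ℕ, 0 < n → IsComposite (k * 2 ^ n + 1)

/-!
`78557` is a Sierpiński number because of Selfridge's covering: every `78557 · 2^n + 1` is
divisible by one of `3, 5, 7, 13, 19, 37, 73`, the prime depending only on `n mod 36`. Any odd
`k ≡ 78557` modulo these primes is therefore covered too. The repunit `R_t = (b^t - 1)/(b - 1)`
satisfies `R_{L+1} ≡ 1 (mod p)` whenever `p ∣ L` and `p - 1 ∣ L`, by Fermat's little theorem; so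
for `t ≡ 1` modulo a suitable period, `78557 · R_t` is such a `k`, and the repdigit is a
Sierpiński number.
-/

open Finset

lemma isComposite_of_dvd_s8 {p n : ℕ} (hp : 1 < p) (hpn : p ∣ n) (hlt : p < n) :
    IsComposite n := by
  obtain ⟨c, rfl⟩ := hpn
  refine ⟨p, c, hp, ?_, rfl⟩
  by_contra! hc
  interval_cases c <;> simp at hlt

theorem isSierpinski_of_covering {k₀ k : ℕ} {P : Finset ℕ}
    (hcover : ∀ n, 0 < n → ∃ p ∈ P, p ∣ k₀ * 2 ^ n + 1) (hP : ∀ p ∈ P, 1 < p ∧ p ≤ 2 * k)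
    (hk : ∀ p ∈ P, k ≡ k₀ [MOD p]) (hodd : Odd k) : IsSierpinski k := by
  refine ⟨hodd.pos, hodd, fun n hn => ?_⟩
  obtain ⟨p, hpP, hdvd⟩ := hcover n hn
  obtain ⟨hp1, hpk⟩ := hP p hpP
  have hlt : 2 * k < k * 2 ^ n + 1 := by
    have : 2 ≤ 2 ^ n := Nat.le_self_pow hn.ne' 2
    nlinarith
  have hmod : k * 2 ^ n + 1 ≡ 0 [MOD p] :=
    (((hk p hpP).mul_right _).add_right 1).trans (Nat.modEq_zero_iff_dvd.mpr hdvd)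
  exact isComposite_of_dvd_s8 hp1 (Nat.modEq_zero_iff_dvd.mp hmod) (by omega)

lemma Nat.dvd_mul_pow_add_one_iff_mod {k a m p : ℕ} (h : a ^ m ≡ 1 [MOD p]) (n : ℕ) :
    p ∣ k * a ^ n + 1 ↔ p ∣ k * a ^ (n % m) + 1 := by
  rw [← ZMod.natCast_eq_zero_iff, ← ZMod.natCast_eq_zero_iff]
  rw [← ZMod.natCast_eq_natCast_iff] at h
  push_cast at h ⊢
  rw [pow_eq_pow_mod n h]

/-- Selfridge's covering set for `78557`; each of its primes divides `2^36 - 1`. -/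
def sierpinskiCover : Finset ℕ := {3, 5, 7, 13, 19, 37, 73}

lemma sierpinskiCover_covers (n : ℕ) : ∃ p ∈ sierpinskiCover, p ∣ 78557 * 2 ^ n + 1 := by
  have htable : ∀ r < 36, ∃ p ∈ sierpinskiCover, p ∣ 78557 * 2 ^ r + 1 := by decide
  have hperiod : ∀ p ∈ sierpinskiCover, 2 ^ 36 ≡ 1 [MOD p] := by decide
  obtain ⟨p, hp, hdvd⟩ := htable (n % 36) (Nat.mod_lt _ (by norm_num))
  exact ⟨p, hp, (Nat.dvd_mul_pow_add_one_iff_mod (hperiod p hp) n).mpr hdvd⟩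

lemma ZMod.pow_succ_eq_self_of_sub_one_dvd {p L : ℕ} [Fact p.Prime] (hL : p - 1 ∣ L)
    (x : ZMod p) : x ^ (L + 1) = x := by
  rcases eq_or_ne x 0 with rfl | hx
  · simp
  obtain ⟨c, rfl⟩ := hL
  rw [pow_succ, pow_mul, ZMod.pow_card_sub_one_eq_one hx, one_pow, one_mul]

lemma ZMod.geom_sum_succ_eq_one {p L : ℕ} [Fact p.Prime] (hp : p ∣ L) (hp1 : p - 1 ∣ L)
    (x : ZMod p) : ∑ i ∈ range (L + 1), x ^ i = 1 := by
  rcases eq_or_ne x 1 with rfl | hx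
  · simp [(ZMod.natCast_eq_zero_iff L p).mpr hp]
  rw [geom_sum_eq hx, ZMod.pow_succ_eq_self_of_sub_one_dvd hp1, div_self (sub_ne_zero.mpr hx)]

lemma Nat.geom_sum_succ_modEq_one {p L : ℕ} (hprime : p.Prime) (hp : p ∣ L) (hp1 : p - 1 ∣ L)
    (b : ℕ) : ∑ i ∈ range (L + 1), b ^ i ≡ 1 [MOD p] := by
  have := Fact.mk hprime
  rw [← ZMod.natCast_eq_natCast_iff]
  push_cast
  exact ZMod.geom_sum_succ_eq_one hp hp1 _

/-- `2` is included so that `R_t` is odd whenever `t ≡ 1` modulo the period. -/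
def sierpinskiPeriod : ℕ := ∏ p ∈ insert 2 sierpinskiCover, p * (p - 1)

lemma sierpinskiPeriod_pos : 0 < sierpinskiPeriod := by
  unfold sierpinskiPeriod sierpinskiCover
  norm_num

lemma prime_of_mem_insert_two_sierpinskiCover {p : ℕ} (hp : p ∈ insert 2 sierpinskiCover) :
    p.Prime := by
  simp only [sierpinskiCover, Finset.mem_insert, Finset.mem_singleton] at hp
  rcases hp with rfl | rfl | rfl | rfl | rfl | rfl | rfl | rfl <;> norm_num

lemma repunit_modEq_one {p : ℕ} (hp : p ∈ insert 2 sierpinskiCover) (b j : ℕ) :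
    ∑ i ∈ range (sierpinskiPeriod * j + 1), b ^ i ≡ 1 [MOD p] := by
  have hdvd : p * (p - 1) ∣ sierpinskiPeriod * j :=
    (Finset.dvd_prod_of_mem _ hp).mul_right _
  exact Nat.geom_sum_succ_modEq_one (prime_of_mem_insert_two_sierpinskiCover hp)
    ((dvd_mul_right _ _).trans hdvd) ((dvd_mul_left _ _).trans hdvd) b

/-- For every integer `b > 78557`, there exist infinitely many positive
integers `t` such that the `b`-repdigit `78557·(b^t − 1)/(b − 1)` is a Sierpiński number. -/
theorem stmt_8 (b : ℕ) (hb : 78557 < b) :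
    {t : ℕ | 0 < t ∧ IsSierpinski (78557 * ((b ^ t - 1) / (b - 1)))}.Infinite := by
  refine Set.infinite_of_injective_forall_mem (f := fun j => sierpinskiPeriod * j + 1)
    (fun i j h => by simpa [sierpinskiPeriod_pos.ne'] using h) fun j => ⟨Nat.succ_pos _, ?_⟩
  rw [← Nat.geomSum_eq (by omega)]
  set R := ∑ i ∈ range (sierpinskiPeriod * j + 1), b ^ i
  have hR : ∀ p ∈ insert 2 sierpinskiCover, R ≡ 1 [MOD p] := fun p hp => repunit_modEq_one hp b j
  have hRodd : Odd R := Nat.odd_iff.mpr (hR 2 (Finset.mem_insert_self _ _))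
  have hcover_bounds : ∀ p ∈ sierpinskiCover, 1 < p ∧ p ≤ 73 := by decide
  refine isSierpinski_of_covering (fun n _ => sierpinskiCover_covers n)
    (fun p hp => ⟨(hcover_bounds p hp).1, by linarith [(hcover_bounds p hp).2, hRodd.pos]⟩)
    (fun p hp => by simpa using (hR p (Finset.mem_insert_of_mem hp)).mul_left 78557)
    (Odd.mul (by decide) hRodd)
end

section
/- Let b ≥ 2 be an integer with b ≡ 180 (mod 11184810) and let t be a positive integer with t ≡ 171 (mod 240). Then the b-repdigit 101·(b^t − 1)/(b − 1) is a Riesel number. -/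
theorem IsComposite.of_dvd {p n : ℕ} (hp : 1 < p) (hpn : p < n) (hdvd : p ∣ n) :
    IsComposite n := by
  obtain ⟨m, rfl⟩ := hdvd
  refine ⟨p, m, hp, ?_, rfl⟩
  by_contra! hm
  interval_cases m <;> omega

theorem isRiesel_of_covering {k m : ℕ} {P : List ℕ} (hk : Odd k) (hm : 0 < m)
    (hP : ∀ p ∈ P, 1 < p ∧ p + 1 < 2 * k ∧ 2 ^ m ≡ 1 [MOD p])
    (hcover : ∀ r < m, ∃ p ∈ P, k * 2 ^ r ≡ 1 [MOD p]) : IsRiesel k := by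
  refine ⟨hk.pos, hk, fun n hn => ?_⟩
  obtain ⟨p, hpP, hkp⟩ := hcover (n % m) (Nat.mod_lt n hm)
  obtain ⟨hp, hpk, hper⟩ := hP p hpP
  have hkn : k * 2 ^ n ≡ 1 [MOD p] :=
    calc k * 2 ^ n = k * (2 ^ m) ^ (n / m) * 2 ^ (n % m) := by
          rw [← pow_mul, mul_assoc, ← pow_add, Nat.div_add_mod]
      _ ≡ k * 1 ^ (n / m) * 2 ^ (n % m) [MOD p] := ((hper.pow _).mul_left _).mul_right _
      _ ≡ 1 [MOD p] := by rwa [one_pow, mul_one]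
  have h2k : 2 * k ≤ k * 2 ^ n := by
    rw [mul_comm]
    exact Nat.mul_le_mul_left k (le_self_pow₀ (by norm_num) hn.ne')
  exact .of_dvd hp (by omega) ((Nat.modEq_iff_dvd' (by omega)).1 hkn.symm)

/-- The `b`-repdigit `k_b^{(t)}`. -/
def repdigit (b k t : ℕ) : ℕ := k * ((b ^ t - 1) / (b - 1))

theorem repdigit_eq_mul_geom_sum {b : ℕ} (hb : 2 ≤ b) (k t : ℕ) :
    repdigit b k t = k * ∑ i ∈ Finset.range t, b ^ i := by
  rw [repdigit, Nat.geomSum_eq hb]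

theorem mul_le_repdigit {b : ℕ} (hb : 2 ≤ b) (k : ℕ) {t : ℕ} (ht : 2 ≤ t) :
    k * b ≤ repdigit b k t := by
  rw [repdigit_eq_mul_geom_sum hb]
  refine Nat.mul_le_mul_left k ?_
  simpa using Finset.single_le_sum (fun i _ => Nat.zero_le (b ^ i)) (Finset.mem_range.2 ht)

theorem cast_repdigit_mul_sub_one {R : Type*} [CommRing R] {b : ℕ} (hb : 2 ≤ b) (k t : ℕ) :
    (repdigit b k t : R) * (b - 1) = k * (b ^ t - 1) := by
  rw [repdigit_eq_mul_geom_sum hb]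
  push_cast
  rw [mul_assoc, geom_sum_mul]

theorem ZMod.pow_eq_pow_of_modEq {p L t s : ℕ} [Fact p.Prime] (hL : p - 1 ∣ L)
    (hts : t ≡ s [MOD L]) (ht : t ≠ 0) (hs : s ≠ 0) (x : ZMod p) : x ^ t = x ^ s := by
  rcases eq_or_ne x 0 with rfl | hx
  · rw [zero_pow ht, zero_pow hs]
  · have hfin : IsOfFinOrder x :=
      isOfFinOrder_iff_pow_eq_one.2 ⟨p - 1, Nat.sub_pos_of_lt (Fact.out : p.Prime).one_lt,
        ZMod.pow_card_sub_one_eq_one hx⟩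
    exact hfin.pow_eq_pow_iff_modEq.2 (hts.of_dvd ((ZMod.orderOf_dvd_card_sub_one hx).trans hL))

theorem repdigit_modEq {p L b b' t t' : ℕ} (k : ℕ) (hp : p.Prime) (hL : p - 1 ∣ L)
    (hb : 2 ≤ b) (hb' : 2 ≤ b') (hbb' : b ≡ b' [MOD p]) (hb'1 : ¬ b' ≡ 1 [MOD p])
    (htt' : t ≡ t' [MOD L]) (ht : t ≠ 0) (ht' : t' ≠ 0) :
    repdigit b k t ≡ repdigit b' k t' [MOD p] := by
  have := Fact.mk hp
  rw [← ZMod.natCast_eq_natCast_iff] at hbb' hb'1 ⊢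
  have hb'_sub_one : (b' : ZMod p) - 1 ≠ 0 := sub_ne_zero.2 (by exact_mod_cast hb'1)
  refine mul_right_cancel₀ hb'_sub_one ?_
  rw [cast_repdigit_mul_sub_one hb', ← hbb', cast_repdigit_mul_sub_one hb,
    ZMod.pow_eq_pow_of_modEq hL htt' ht ht']

def coveringPrimes : List ℕ := [3, 5, 7, 13, 17, 241]

theorem coveringPrimes_cover_repdigit :
    ∀ r < 24, ∃ p ∈ coveringPrimes, repdigit 180 101 171 * 2 ^ r ≡ 1 [MOD p] := by
  decide

theorem coveringPrimes_le_and_two_pow_modEq :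
    ∀ p ∈ coveringPrimes, p ≤ 241 ∧ 2 ^ 24 ≡ 1 [MOD p] := by
  decide

theorem two_cons_coveringPrimes_spec : ∀ p ∈ 2 :: coveringPrimes,
    p.Prime ∧ p ∣ 11184810 ∧ p - 1 ∣ 240 ∧ ¬ 180 ≡ 1 [MOD p] := by
  simp only [coveringPrimes, List.forall_mem_cons, List.not_mem_nil, IsEmpty.forall_iff,
    forall_const]
  norm_num [Nat.ModEq]

theorem stmt_11_general (b t : ℕ) (hb : 2 ≤ b) (hbmod : b ≡ 180 [MOD 11184810])
    (htmod : t ≡ 171 [MOD 240]) :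
    IsRiesel (101 * ((b ^ t - 1) / (b - 1))) := by
  have ht : 171 ≤ t := (htmod : t % 240 = 171 % 240).symm.trans_le (Nat.mod_le t 240)
  have hK : ∀ p ∈ 2 :: coveringPrimes, repdigit b 101 t ≡ repdigit 180 101 171 [MOD p] := by
    intro p hp
    obtain ⟨hp, hpN, hpL, hp180⟩ := two_cons_coveringPrimes_spec p hp
    exact repdigit_modEq 101 hp hpL hb (by norm_num) (hbmod.of_dvd hpN) hp180 htmod (by omega)
      (by norm_num)
  have hK_ge : 101 * b ≤ repdigit b 101 t := mul_le_repdigit hb 101 (by omega)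
  have hK_odd : Odd (repdigit b 101 t) :=
    Nat.odd_iff.2 ((hK 2 (by simp)).trans (by decide : repdigit 180 101 171 ≡ 1 [MOD 2]))
  show IsRiesel (repdigit b 101 t)
  refine isRiesel_of_covering (m := 24) (P := coveringPrimes) hK_odd (by norm_num)
    (fun p hp => ?_) (fun r hr => ?_)
  · obtain ⟨hp241, h24⟩ := coveringPrimes_le_and_two_pow_modEq p hp
    have hp1 := (two_cons_coveringPrimes_spec p (List.mem_cons_of_mem 2 hp)).1.one_lt
    exact ⟨hp1, by omega, h24⟩
  · obtain ⟨p, hp, hcover⟩ := coveringPrimes_cover_repdigit r hr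
    exact ⟨p, hp, ((hK p (List.mem_cons_of_mem 2 hp)).mul_right _).trans hcover⟩

/-- Let `b ≥ 2` be an integer with `b ≡ 180 (mod 11184810)` and let `t`
be a positive integer with `t ≡ 171 (mod 240)`. Then the `b`-repdigit
`101·(b^t − 1)/(b − 1)` is a Riesel number. -/
theorem stmt_11 (b t : ℕ) (hb : 2 ≤ b) (hbmod : b ≡ 180 [MOD 11184810])
    (ht : 0 < t) (htmod : t ≡ 171 [MOD 240]) :
    IsRiesel (101 * ((b ^ t - 1) / (b - 1))) :=
  stmt_11_general b t hb hbmod htmod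
end

section
/- Let τ be a positive integer such that 2^{2^τ} − 1 has at least two distinct primitive prime divisors. For each 1 ≤ j ≤ τ, let p_j be a primitive prime divisor of 2^{2^j} − 1, let q be a primitive prime divisor of 2^{2^τ} − 1 with q ≠ p_τ, and let P = p_1·p_2·⋯·p_τ. Let b > 2 be an integer with b ≡ 1 (mod P) satisfying one of: (i) b ≡ 0 (mod q); (ii) b ≡ 1 (mod q); (iii) b ≢ 0 (mod q), b ≢ 1 (mod q), and gcd(P, ord_q(b)) = 1, where ord_q(b) is the multiplicative order of b modulo q. Then there exist infinitely many positive integers t such that the b-repunit (b^t − 1)/(b − 1) is a Riesel number. -/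
/-- A prime `p` is a primitive prime divisor of `2^m − 1` if `p ∣ 2^m − 1` and
`p ∤ 2^μ − 1` for every positive integer `μ < m`. -/
def IsPrimitivePrimeDivisor (p m : ℕ) : Prop :=
  p.Prime ∧ p ∣ 2 ^ m - 1 ∧ ∀ μ : ℕ, 0 < μ → μ < m → ¬ p ∣ 2 ^ μ - 1

/-!
A covering-congruence argument. Write `n = 2^v m` with `m` odd. If `v < τ`, the prime
`p_{v+1}` satisfies `2^{2^v} ≡ -1`, hence `2^n ≡ -1 (mod p_{v+1})`; if `v ≥ τ`, then
`2^n ≡ 1 (mod q)`. So `k · 2^n - 1` always has one of these primes as a proper factor once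
`k ≡ -1 (mod P)` and `k ≡ 1 (mod q)`. For the repunit `k = 1 + b + ⋯ + b^{t-1}`, the first
congruence follows from `b ≡ 1 (mod P)` and `t ≡ -1 (mod P)`; the second holds for `t` in a
suitable residue class modulo some `e` coprime to `P` (`e = 1`, `q` or `ord_q b` in the three
cases). The Chinese remainder theorem supplies infinitely many such `t`, also odd, which makes
`k` odd.
-/

open Finset Filter

lemma natCast_eq_one_iff_dvd_sub_one {r x : ℕ} (hx : 1 ≤ x) : (x : ZMod r) = 1 ↔ r ∣ x - 1 := by
  rw [← ZMod.natCast_eq_zero_iff, Nat.cast_sub hx, Nat.cast_one, sub_eq_zero]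

lemma isComposite_of_dvd_s14 {r N : ℕ} (hr : 1 < r) (hrN : r < N) (h : r ∣ N) : IsComposite N := by
  obtain ⟨m, rfl⟩ := h
  exact ⟨r, m, hr, (lt_mul_iff_one_lt_right (by omega)).mp hrN, rfl⟩

lemma isComposite_mul_two_pow_sub_one {k n r : ℕ} (hr : 1 < r) (hrk : r < k) (hn : 0 < n)
    (h : ((k * 2 ^ n : ℕ) : ZMod r) = 1) : IsComposite (k * 2 ^ n - 1) := by
  have hk2 : k * 2 ≤ k * 2 ^ n := Nat.mul_le_mul_left k (Nat.le_self_pow hn.ne' 2)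
  exact isComposite_of_dvd_s14 hr (by omega) ((natCast_eq_one_iff_dvd_sub_one (by omega)).mp h)

namespace IsPrimitivePrimeDivisor

variable {p m : ℕ}

lemma two_pow_eq_one (h : IsPrimitivePrimeDivisor p m) : (2 : ZMod p) ^ m = 1 := by
  exact_mod_cast (natCast_eq_one_iff_dvd_sub_one Nat.one_le_two_pow).mpr h.2.1

lemma two_pow_ne_one (h : IsPrimitivePrimeDivisor p m) {μ : ℕ} (hμ : 0 < μ) (hμm : μ < m) :
    (2 : ZMod p) ^ μ ≠ 1 := fun h' =>
  h.2.2 μ hμ hμm ((natCast_eq_one_iff_dvd_sub_one Nat.one_le_two_pow).mp (mod_cast h'))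

lemma ne_two (h : IsPrimitivePrimeDivisor p m) (hm : 0 < m) : p ≠ 2 := by
  rintro rfl
  have h2 := h.two_pow_eq_one
  rw [show (2 : ZMod 2) = 0 from rfl, zero_pow hm.ne'] at h2
  exact zero_ne_one h2

lemma index_unique {m' : ℕ} (h : IsPrimitivePrimeDivisor p m) (h' : IsPrimitivePrimeDivisor p m')
    (hm : 0 < m) (hm' : 0 < m') : m = m' := by
  rcases lt_trichotomy m m' with hlt | heq | hgt
  · exact absurd h.2.1 (h'.2.2 m hm hlt)
  · exact heq
  · exact absurd h'.2.1 (h.2.2 m' hm' hgt)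

lemma two_pow_eq_neg_one (h : IsPrimitivePrimeDivisor p (2 * m)) (hm : 0 < m) :
    (2 : ZMod p) ^ m = -1 := by
  have : Fact p.Prime := ⟨h.1⟩
  have hsq : ((2 : ZMod p) ^ m) ^ 2 = 1 := by rw [← pow_mul, mul_comm]; exact h.two_pow_eq_one
  exact (sq_eq_one_iff.mp hsq).resolve_left (h.two_pow_ne_one hm (by omega))

end IsPrimitivePrimeDivisor

theorem isRiesel_of_covering_s14 {τ k q : ℕ} (p : Fin τ → ℕ)
    (hp : ∀ j : Fin τ, IsPrimitivePrimeDivisor (p j) (2 ^ (j.val + 1)))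
    (hq : IsPrimitivePrimeDivisor q (2 ^ τ))
    (hkp : ∀ j, (k : ZMod (p j)) = -1) (hkq : (k : ZMod q) = 1)
    (hpk : ∀ j, p j < k) (hqk : q < k) (hk : Odd k) : IsRiesel k := by
  refine ⟨by omega, hk, fun n hn => ?_⟩
  obtain ⟨v, m, hm, rfl⟩ := Nat.exists_eq_two_pow_mul_odd hn.ne'
  by_cases hv : τ ≤ v
  · refine isComposite_mul_two_pow_sub_one hq.1.one_lt hqk hn ?_
    obtain ⟨c, hc⟩ : 2 ^ τ ∣ 2 ^ v * m := (pow_dvd_pow 2 hv).mul_right m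
    push_cast
    rw [hc, pow_mul, hq.two_pow_eq_one, one_pow, hkq, one_mul]
  · set j : Fin τ := ⟨v, not_le.mp hv⟩
    refine isComposite_mul_two_pow_sub_one (hp j).1.one_lt (hpk j) hn ?_
    have h2 : (2 : ZMod (p j)) ^ 2 ^ v = -1 :=
      (pow_succ' 2 v ▸ hp j).two_pow_eq_neg_one (by positivity)
    push_cast
    rw [pow_mul, h2, hm.neg_one_pow, hkp, neg_one_mul, neg_neg]

lemma geom_sum_eq_one_of_pow_eq_self {R : Type*} [Ring R] [NoZeroDivisors R] {x : R} {t : ℕ}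
    (hx : x ≠ 1) (h : x ^ t = x) : ∑ i ∈ range t, x ^ i = 1 := by
  have hmul := geom_sum_mul x t
  rw [h] at hmul
  exact mul_right_cancel₀ (sub_ne_zero.mpr hx) (hmul.trans (one_mul _).symm)

lemma odd_geom_sum_of_odd {b t : ℕ} (ht : Odd t) : Odd (∑ i ∈ range t, b ^ i) := by
  rw [← ZMod.natCast_eq_one_iff_odd]
  push_cast
  rcases Nat.even_or_odd b with hb | hb
  · rw [ZMod.natCast_eq_zero_iff_even.mpr hb]
    exact geom_sum_eq_one_of_pow_eq_self zero_ne_one (zero_pow ht.pos.ne')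
  · simp [ZMod.natCast_eq_one_iff_odd.mpr hb, ZMod.natCast_eq_one_iff_odd.mpr ht]

lemma le_geom_sum {b : ℕ} (hb : 0 < b) (t : ℕ) : t ≤ ∑ i ∈ range t, b ^ i :=
  calc t = ∑ _i ∈ range t, 1 := by simp
    _ ≤ ∑ i ∈ range t, b ^ i := sum_le_sum fun i _ => Nat.one_le_pow i b hb

lemma exists_modulus_geom_sum_eq_one {q b P : ℕ} [hq : Fact q.Prime] (hPq : P.Coprime q)
    (hcond : q ∣ b ∨ b ≡ 1 [MOD q] ∨
      (¬ q ∣ b ∧ ¬ b ≡ 1 [MOD q] ∧ Nat.gcd P (orderOf (b : ZMod q)) = 1)) :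
    ∃ e, 0 < e ∧ P.Coprime e ∧
      ∀ t, 0 < t → t ≡ 1 [MOD e] → ∑ i ∈ range t, (b : ZMod q) ^ i = 1 := by
  simp only [← ZMod.natCast_eq_zero_iff, ← ZMod.natCast_eq_natCast_iff, Nat.cast_one] at hcond
  rcases hcond with h0 | h1 | ⟨h0, h1, hord⟩
  · refine ⟨1, one_pos, P.coprime_one_right, fun t ht _ => ?_⟩
    rw [h0]
    exact geom_sum_eq_one_of_pow_eq_self zero_ne_one (zero_pow ht.ne')
  · refine ⟨q, hq.out.pos, hPq, fun t _ ht => ?_⟩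
    rw [← ZMod.natCast_eq_natCast_iff, Nat.cast_one] at ht
    simp [h1, ht]
  · refine ⟨_, orderOf_pos_iff.mpr ?_, hord, fun t _ ht => geom_sum_eq_one_of_pow_eq_self h1 ?_⟩
    · exact isOfFinOrder_iff_pow_eq_one.mpr
        ⟨q - 1, Nat.sub_pos_of_lt hq.out.one_lt, ZMod.pow_card_sub_one_eq_one h0⟩
    · rw [← pow_mod_orderOf, ht, pow_mod_orderOf, pow_one]

theorem isRiesel_repunit {τ b q t : ℕ} (p : Fin τ → ℕ)
    (hp : ∀ j : Fin τ, IsPrimitivePrimeDivisor (p j) (2 ^ (j.val + 1)))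
    (hq : IsPrimitivePrimeDivisor q (2 ^ τ)) (hb : 2 ≤ b)
    (hbp : ∀ j, b ≡ 1 [MOD p j]) (htp : ∀ j, p j ∣ t + 1)
    (hgeom : ∑ i ∈ range t, (b : ZMod q) ^ i = 1)
    (hpt : ∀ j, p j < t) (hqt : q < t) (ht : Odd t) :
    IsRiesel ((b ^ t - 1) / (b - 1)) := by
  rw [← Nat.geomSum_eq hb]
  have hkt := le_geom_sum (by omega : 0 < b) t
  refine isRiesel_of_covering_s14 p hp hq (fun j => ?_) (by push_cast; exact hgeom)
    (fun j => (hpt j).trans_le hkt) (hqt.trans_le hkt) (odd_geom_sum_of_odd ht)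
  have hb1 : (b : ZMod (p j)) = 1 := by
    exact_mod_cast (ZMod.natCast_eq_natCast_iff _ _ _).mpr (hbp j)
  have ht1 : ((t + 1 : ℕ) : ZMod (p j)) = 0 := (ZMod.natCast_eq_zero_iff _ _).mpr (htp j)
  push_cast at ht1 ⊢
  simpa [hb1] using eq_neg_of_add_eq_zero_left ht1

lemma infinite_setOf_dvd_add_one_and_modEq_one {P m : ℕ} (hP : 0 < P) (hm : 0 < m)
    (hPm : P.Coprime m) (N : ℕ) : {t | P ∣ t + 1 ∧ t ≡ 1 [MOD m] ∧ N < t}.Infinite := by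
  obtain ⟨t₀, ht₀P, ht₀m⟩ := Nat.chineseRemainder hPm (P - 1) 1
  have hM : P * m ≠ 0 := by positivity
  refine (Nat.frequently_atTop_iff_infinite.mp
    ((Nat.frequently_modEq hM t₀).and_eventually (eventually_gt_atTop N))).mono ?_
  rintro t ⟨htM, htN⟩
  obtain ⟨htP, htm⟩ := (Nat.modEq_and_modEq_iff_modEq_mul hPm).mpr htM
  refine ⟨?_, htm.trans ht₀m, htN⟩
  have htP1 := (htP.trans ht₀P).add_right 1
  rw [Nat.sub_add_cancel hP] at htP1
  exact Nat.dvd_of_mod_eq_zero (by simpa [Nat.ModEq] using htP1)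

/-- Let `τ ≥ 1` be such that `2^{2^τ} − 1` has at least two distinct
primitive prime divisors.  For each `1 ≤ j ≤ τ` let `p_j` be a primitive prime divisor of
`2^{2^j} − 1`, let `q` be a primitive prime divisor of `2^{2^τ} − 1` with `q ≠ p_τ`, and
let `P = p_1⋯p_τ`.  If `b > 2` is an integer with `b ≡ 1 (mod P)` satisfying (i)
`b ≡ 0 (mod q)`, or (ii) `b ≡ 1 (mod q)`, or (iii) `b ≢ 0 (mod q)`, `b ≢ 1 (mod q)` and
`gcd(P, ord_q(b)) = 1`, then there exist infinitely many positive integers `t` such that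
the `b`-repunit `(b^t − 1)/(b − 1)` is a Riesel number.  (Here `p_j` is indexed by
`j : Fin τ`, with `p ⟨j⟩` a primitive prime divisor of `2^{2^{j+1}} − 1`.) -/
theorem stmt_14 (τ : ℕ) (hτ : 0 < τ)
    (b : ℕ) (hb : 2 < b)
    (p : Fin τ → ℕ) (hp : ∀ j : Fin τ, IsPrimitivePrimeDivisor (p j) (2 ^ (j.val + 1)))
    (q : ℕ) (hq : IsPrimitivePrimeDivisor q (2 ^ τ)) (hqp : q ≠ p ⟨τ - 1, by omega⟩)
    (P : ℕ) (hP : P = ∏ j, p j)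
    (hbP : b ≡ 1 [MOD P])
    (hcond : q ∣ b ∨ b ≡ 1 [MOD q] ∨
      (¬ q ∣ b ∧ ¬ b ≡ 1 [MOD q] ∧ Nat.gcd P (orderOf (b : ZMod q)) = 1)) :
    {t : ℕ | 0 < t ∧ IsRiesel ((b ^ t - 1) / (b - 1))}.Infinite := by
  have : Fact q.Prime := ⟨hq.1⟩
  have hpP : ∀ j, p j ∣ P := fun j => hP ▸ dvd_prod_of_mem p (mem_univ j)
  have hPpos : 0 < P := hP ▸ prod_pos fun j _ => (hp j).1.pos
  have hpq : ∀ j, p j ≠ q := by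
    intro j h
    have hj : j.val + 1 = τ := Nat.pow_right_injective le_rfl
      ((h ▸ hp j).index_unique hq (by positivity) (by positivity))
    exact hqp (h ▸ congrArg p (Fin.ext (by simp only; omega)))
  have hPq : P.Coprime q := hP ▸ Nat.Coprime.prod_left fun j _ =>
    (Nat.coprime_primes (hp j).1 hq.1).mpr (hpq j)
  have hP2 : P.Coprime 2 := hP ▸ Nat.Coprime.prod_left fun j _ =>
    (Nat.coprime_primes (hp j).1 Nat.prime_two).mpr ((hp j).ne_two (by positivity))
  obtain ⟨e, he, hPe, hgeom⟩ := exists_modulus_geom_sum_eq_one hPq hcond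
  refine (infinite_setOf_dvd_add_one_and_modEq_one hPpos (by positivity : 0 < 2 * e)
    (hP2.mul_right hPe) (P + q)).mono ?_
  rintro t ⟨htP, hte, htlarge⟩
  refine ⟨by omega, isRiesel_repunit p hp hq hb.le (fun j => hbP.of_dvd (hpP j))
    (fun j => (hpP j).trans htP) (hgeom t (by omega) (hte.of_mul_left 2))
    (fun j => (Nat.le_of_dvd hPpos (hpP j)).trans_lt (by omega)) (by omega)
    (Nat.odd_iff.mpr (hte.of_mul_right e))⟩
end
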